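/- arXiv:2209.12581 — 3 statements merged into one kernel-verified Lean document; each statement's English description precedes it below -/
import Mathlib

section
/- Let E ≥ 1 and let O : ℕ → ℕ be monotonically increasing on evaluation steps (multiples of E). Let S, L be length sequences of the Two-Tailed Averaging algorithm such that S(n) < O(n) at every evaluation step n, and at every evaluation step either L(n) = S(n) (no switch has yet occurred) or L(n) = S(n) + S'(m) where m ≤ n is the most recent switch point and S'(m) = S(m−E) + E is the final length of the previous short average. Then L(n) < 2·O(n) + E at every evaluation step n. -/
theorem stmt_4_general (E : ℕ) (O S L : ℕ → ℕ)
    (hO : Monotone O)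
    (hSopt : ∀ k, S k < O k)
    (hL : ∀ k, L k = S k ∨
          ∃ m, 1 ≤ m ∧ m ≤ k ∧ L k = S k + (S (m - 1) + E)) :
    ∀ k, L k < 2 * O k + E := by
  intro k
  have hcur := hSopt k
  rcases hL k with hL | ⟨m, -, hmk, hL⟩
  · omega
  · have hprev : S (m - 1) < O k := (hSopt (m - 1)).trans_le (hO (by omega))
    omega

/-- Proposition 1 (second half): indexed by evaluation count `k` (step `n = k * E`).
At every evaluation step, either no switch has occurred yet and `L k = S k`, or
`L k = S k + S' m` where `m` is the most recent switch point and
`S' m = S (m - 1) + E` is the final length of the previous short average.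
Together with `S k < O k` and monotonicity of `O`, `L` is less than twice the
optimal length plus one evaluation period. -/
theorem stmt_4 (E : ℕ) (hE : 1 ≤ E) (O S L : ℕ → ℕ)
    (hO : Monotone O)
    (hSopt : ∀ k, S k < O k)
    (hL : ∀ k, L k = S k ∨
          ∃ m, 1 ≤ m ∧ m ≤ k ∧ L k = S k + (S (m - 1) + E)) :
    ∀ k, L k < 2 * O k + E :=
  stmt_4_general E O S L hO hSopt hL
end

section
/- Let E ≥ 1, let O : ℕ → ℕ be monotonically increasing on evaluation steps, and define O_E(n) = ⌊O(n)/E⌋·E and O^E(n) = ⌈O(n)/E⌉·E. Let n₁ < n₂ be two consecutive switch points of the Two-Tailed Averaging length process, meaning: L(n₁) equals the final length S'(n₁) of the previous short average with S'(n₁) ≤ O^E(n₁), L increases by E at each evaluation step on (n₁, n₂], and for n₂ to be a switch point it holds that O(n₂) < L(n₂ − E) + E. Then there exists an evaluation step n ∈ [n₁, n₂ − E] with L(n) = O^E(n) or L(n) = O_E(n). -/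
/-!
Write `⌈O⌉ = ⌈O / E⌉ E` and `⌊O⌋ = ⌊O / E⌋ E`. The length `L` climbs through the multiples
of `E` one at a time while `⌈O⌉` is a monotone sequence of multiples of `E`, so once `L` has
caught up with `⌈O⌉` it must have met it exactly. If it has not caught up by the last
evaluation before the switch, the switching condition forces `⌊O⌋ ≤ L < ⌈O⌉ ≤ ⌊O⌋ + E`
there, and `L = ⌊O⌋`.
-/

theorem add_sub_one_div_mul_le_div_mul_add (A E : ℕ) : (A + E - 1) / E * E ≤ A / E * E + E := by
  rcases E.eq_zero_or_pos with rfl | hE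
  · simp
  · calc (A + E - 1) / E * E ≤ (A + E) / E * E := by gcongr; omega
      _ = A / E * E + E := by rw [Nat.add_div_right A hE, Nat.add_mul, one_mul]

theorem monotone_add_sub_one_div_mul (E : ℕ) : Monotone fun A : ℕ => (A + E - 1) / E * E :=
  fun _ _ h => Nat.mul_le_mul_right E (Nat.div_le_div_right (by omega))

section AddStep

variable {E a b : ℕ} {f : ℕ → ℕ}

theorem dvd_of_succ_eq_add (ha : E ∣ f a) (hf : ∀ k, a ≤ k → k < b → f (k + 1) = f k + E) :
    ∀ k, a ≤ k → k ≤ b → E ∣ f k := by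
  intro k hak hkb
  induction k, hak using Nat.le_induction with
  | base => exact ha
  | succ k hak ih => rw [hf k hak (by omega)]; exact dvd_add (ih (by omega)) dvd_rfl

theorem exists_eq_of_succ_eq_add_of_monotone {g : ℕ → ℕ} (hab : a ≤ b) (hg : Monotone g)
    (hgE : ∀ k, E ∣ g k) (hfE : ∀ k, a ≤ k → k ≤ b → E ∣ f k)
    (hf : ∀ k, a ≤ k → k < b → f (k + 1) = f k + E) (ha : f a ≤ g a) (hb : g b ≤ f b) :
    ∃ k, a ≤ k ∧ k ≤ b ∧ f k = g k := by
  induction b, hab using Nat.le_induction with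
  | base => exact ⟨a, le_rfl, le_rfl, le_antisymm ha hb⟩
  | succ b hab ih =>
    by_cases hgb : g b ≤ f b
    · obtain ⟨k, hak, hkb, hk⟩ := ih (fun k h₁ h₂ => hfE k h₁ (by omega))
        (fun k h₁ h₂ => hf k h₁ (by omega)) hgb
      exact ⟨k, hak, by omega, hk⟩
    · have hstep := hf b hab (by omega)
      have hcaught : f (b + 1) ≤ g b :=
        Nat.le_of_lt_add_of_dvd (by omega) (hfE (b + 1) (by omega) le_rfl) (hgE b)
      exact ⟨b + 1, by omega, le_rfl, le_antisymm (hcaught.trans (hg b.le_succ)) hb⟩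

end AddStep

/-- Indexed by evaluation count `k` (evaluation step `n = k * E`); `((O k + E - 1) / E) * E`
is `O^E` and `(O k / E) * E` is `O_E`. -/
theorem stmt_6_general (E : ℕ) (O L : ℕ → ℕ)
    (hO : Monotone O)
    (k₁ k₂ : ℕ) (hk : k₁ < k₂)
    (hstart : L k₁ ≤ ((O k₁ + E - 1) / E) * E)
    (hgrow : ∀ k, k₁ ≤ k → k < k₂ → L (k + 1) = L k + E)
    (hEdvd : E ∣ L k₁)
    (hend : O k₂ < L (k₂ - 1) + E) :
    ∃ k, k₁ ≤ k ∧ k ≤ k₂ - 1 ∧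
      (L k = ((O k + E - 1) / E) * E ∨ L k = (O k / E) * E) := by
  have hdvd : ∀ k, k₁ ≤ k → k ≤ k₂ - 1 → E ∣ L k := fun k h₁ h₂ =>
    dvd_of_succ_eq_add hEdvd hgrow k h₁ (by omega)
  set n := k₂ - 1
  by_cases hup : (O n + E - 1) / E * E ≤ L n
  · obtain ⟨k, h₁, h₂, hk⟩ := exists_eq_of_succ_eq_add_of_monotone (by omega)
      ((monotone_add_sub_one_div_mul E).comp hO) (fun k => dvd_mul_left _ _) hdvd
      (fun k h₁ h₂ => hgrow k h₁ (by omega)) hstart hup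
    exact ⟨k, h₁, h₂, Or.inl hk⟩
  · have hfloor : O n / E * E < L n + E :=
      calc O n / E * E ≤ O n := Nat.div_mul_le_self _ _
        _ ≤ O k₂ := hO (by omega)
        _ < L n + E := hend
    refine ⟨n, by omega, le_rfl, Or.inr (le_antisymm ?_ ?_)⟩
    · exact Nat.le_of_lt_add_of_dvd
        ((not_le.mp hup).trans_le (add_sub_one_div_mul_le_div_mul_add _ _))
        (hdvd n (by omega) le_rfl) (dvd_mul_left _ _)
    · exact Nat.le_of_lt_add_of_dvd hfloor (dvd_mul_left _ _) (hdvd n (by omega) le_rfl)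

/-- Proposition 3 (once-in-a-while optimality), indexed by evaluation count `k`
(evaluation step `n = k * E`); lengths are numbers of iterates.  `O` is the optimal
length, `O_E k = (O k / E) * E` rounds it down and `((O k + E - 1) / E) * E` rounds
it up to a multiple of `E`.  Between two consecutive switch points `k₁ < k₂`:
at `k₁` the long average continues the previous short average with
`L k₁ ≤ ⌈O k₁ / E⌉ E`, `L` grows by `E` at each evaluation, and for `k₂` to be a
switch point `O k₂ < L (k₂ - 1) + E`.  Then the long average is nearly optimal at
least once in `[k₁, k₂ - 1]`. -/
theorem stmt_6 (E : ℕ) (hE : 1 ≤ E) (O L : ℕ → ℕ)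
    (hO : Monotone O)
    (k₁ k₂ : ℕ) (hk : k₁ < k₂)
    (hstart : L k₁ ≤ ((O k₁ + E - 1) / E) * E)
    (hgrow : ∀ k, k₁ ≤ k → k < k₂ → L (k + 1) = L k + E)
    (hEdvd : E ∣ L k₁)
    (hend : O k₂ < L (k₂ - 1) + E) :
    ∃ k, k₁ ≤ k ∧ k ≤ k₂ - 1 ∧
      (L k = ((O k + E - 1) / E) * E ∨ L k = (O k / E) * E) :=
  stmt_6_general E O L hO k₁ k₂ hk hstart hgrow hEdvd hend
end

section
/- Let E ≥ 1 and suppose the Two-Tailed Averaging length processes satisfy: for all evaluation steps t ≥ E, L(t) ≥ S'(SP(t)) where SP(t) is the most recent switch point before t and S'(SP(t)) is the final length of the short average ending there. If the sequence of final short-average lengths (S_N) tends to infinity in probability and switch points occur infinitely often, then L(t) → ∞ in probability as t → ∞. -/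
open MeasureTheory Filter Topology

theorem tendsto_measure_setOf_le_of_eventually_le {Ω ι α : Type*} [MeasurableSpace Ω]
    [Preorder α] {μ : Measure Ω} {l : Filter ι} {X Y : ι → Ω → α}
    (hle : ∀ᶠ t in l, ∀ ω, Y t ω ≤ X t ω) {M : α}
    (hY : Tendsto (fun t => μ {ω | Y t ω ≤ M}) l (𝓝 0)) :
    Tendsto (fun t => μ {ω | X t ω ≤ M}) l (𝓝 0) := by
  refine tendsto_of_tendsto_of_tendsto_of_le_of_le' tendsto_const_nhds hY
    (Eventually.of_forall fun _ => zero_le) ?_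
  filter_upwards [hle] with t ht
  exact measure_mono fun ω hω => (ht ω).trans hω

theorem stmt_15_general {Ω : Type*} [MeasurableSpace Ω] (μ : Measure Ω)
    (E : ℕ)
    (L : ℕ → Ω → ℕ) (S : ℕ → Ω → ℕ) (N : ℕ → ℕ)
    (hdom : ∀ t, E ≤ t → ∀ ω, S (N t) ω ≤ L t ω)
    (hinf : Tendsto N atTop atTop)
    (hS : ∀ M : ℕ, Tendsto (fun n => μ {ω | S n ω ≤ M}) atTop (nhds 0)) :
    ∀ M : ℕ, Tendsto (fun t => μ {ω | L t ω ≤ M}) atTop (nhds 0) := fun M =>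
  tendsto_measure_setOf_le_of_eventually_le ((eventually_ge_atTop E).mono hdom)
    ((hS M).comp hinf)

/-- Final step of the divergence proposition: for `t ≥ E`, the long average's
length `L t` dominates the final length `S (N t)` of the most recent finished
short average (every long average except the first continues the previous short
average).  Switch points occur infinitely often, i.e. the index `N t` of the most
recent switch tends to infinity with `t`.  If the final short-average lengths
`S_N` tend to infinity in probability, then so does `L t`. -/
theorem stmt_15 {Ω : Type*} [MeasurableSpace Ω] (μ : Measure Ω)
    [IsProbabilityMeasure μ] (E : ℕ) (hE : 1 ≤ E)
    (L : ℕ → Ω → ℕ) (S : ℕ → Ω → ℕ) (N : ℕ → ℕ)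
    (hdom : ∀ t, E ≤ t → ∀ ω, S (N t) ω ≤ L t ω)
    (hinf : Tendsto N atTop atTop)
    (hS : ∀ M : ℕ, Tendsto (fun n => μ {ω | S n ω ≤ M}) atTop (nhds 0)) :
    ∀ M : ℕ, Tendsto (fun t => μ {ω | L t ω ≤ M}) atTop (nhds 0) :=
  stmt_15_general μ E L S N hdom hinf hS
end
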